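/- Let g be a finite-dimensional complex simple Lie algebra not of type A₁, with the grading data of the context. With the Killing form normalized so that the Casimir eigenvalue of the adjoint representation is 1, the Casimir eigenvalue of the component of S²g with highest weight 2α₀ is (2α₀+2ρ, 2α₀) = 2(v+3)/(v+2), and the Casimir eigenvalue of the component with highest weight α₀+ᾶ is (α₀+ᾶ+2ρ, α₀+ᾶ) = (v+h+2)/(v+2). Consequently, normalizing Vogel's parameters so that α = −2, one has β = h′+2, γ = h+2, and t = v+2 equals the dual Coxeter number of g. -/

import Mathlib

/-!
Write `a = (α₀, α₀)` and `2ρ = ∑_{μ > 0} μ`. The positive roots not orthogonal to `α₀` are `α₀`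
itself and the `2v` roots of level one (those with `2(μ, α₀) = a`), so `(2ρ, α₀) = (v + 1) a`,
and the normalization `(α₀ + 2ρ, α₀) = 1` forces `a = 1/(v + 2)`. The level-one roots are
permuted by `μ ↦ α₀ - μ`, so for `ᾶ ⊥ α₀` only the roots of `h` contribute to `(2ρ, ᾶ)`, whence
`(ᾶ + 2ρ, ᾶ) = h (ᾶ, ᾶ)`; and `(ᾶ, ᾶ) = a` because the highest root is long. Both Casimir
eigenvalues then follow by bilinearity, and Vogel's parameters by solving linear equations.

The root-system facts this needs (integrality, stability under reflections, sums of roots at an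
obtuse angle, positivity of the form on roots) are read off from the theory of Lie algebras
with nondegenerate Killing form, which applies because a simple Lie algebra is semisimple.
-/

open Finset
open scoped Classical

noncomputable section

namespace Stmt6

variable {L : Type*} [LieRing L] [LieAlgebra ℂ L] (H : LieSubalgebra ℂ L)

/-- The root space of a linear functional `α` on the Cartan subalgebra `H`: the
simultaneous eigenspace of the operators `ad h`, `h ∈ H`, with eigenvalues `α h`. -/
def rootSpace' (α : Module.Dual ℂ H) : Submodule ℂ L where
  carrier := {x | ∀ h : H, ⁅(h : L), x⁆ = α h • x}
  add_mem' := fun {a b} ha hb => by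
    intro h; rw [lie_add, ha h, hb h, smul_add]
  zero_mem' := by intro h; rw [lie_zero, smul_zero]
  smul_mem' := fun c x hx => by
    intro h; rw [lie_smul, hx h, smul_comm]

/-- `α` is a root of `L` with respect to the Cartan subalgebra `H`. -/
def IsRootOf (α : Module.Dual ℂ H) : Prop := α ≠ 0 ∧ rootSpace' H α ≠ ⊥

/-- `α` is a simple root: a positive root which is not the sum of two positive roots. -/
def IsSimpleRootOf (Φpos : Finset (Module.Dual ℂ H)) (α : Module.Dual ℂ H) : Prop :=
  α ∈ Φpos ∧ ∀ β ∈ Φpos, ∀ γ ∈ Φpos, α ≠ β + γ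

/-- Nonnegative integer combinations of the simple roots. -/
def posCone (Φpos : Finset (Module.Dual ℂ H)) : AddSubmonoid (Module.Dual ℂ H) :=
  AddSubmonoid.closure {μ | IsSimpleRootOf H Φpos μ}

/-- `α₀` is the highest root: it is a root and `α₀ - γ` is a nonnegative integer
combination of simple roots, for every root `γ`. -/
def IsHighestRootOf (Φ Φpos : Finset (Module.Dual ℂ H)) (α₀ : Module.Dual ℂ H) : Prop :=
  α₀ ∈ Φ ∧ ∀ γ ∈ Φ, α₀ - γ ∈ posCone H Φpos

/-- `γ` is a long root: its squared length, with respect to the invariant form `B`,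
is maximal among all roots. -/
def IsLongRootOf (Φ : Finset (Module.Dual ℂ H))
    (B : Module.Dual ℂ H → Module.Dual ℂ H → ℚ) (γ : Module.Dual ℂ H) : Prop :=
  γ ∈ Φ ∧ ∀ δ ∈ Φ, B δ δ ≤ B γ γ

/-- `τ` is a highest long root orthogonal to all the elements of `S`:  it is a long root
orthogonal to `S` dominating every long root orthogonal to `S`. -/
def IsHighestLongRootOrtho (Φ Φpos : Finset (Module.Dual ℂ H))
    (B : Module.Dual ℂ H → Module.Dual ℂ H → ℚ) (S : Set (Module.Dual ℂ H))
    (τ : Module.Dual ℂ H) : Prop :=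
  IsLongRootOf H Φ B τ ∧ (∀ s ∈ S, B τ s = 0) ∧
    ∀ γ, IsLongRootOf H Φ B γ → (∀ s ∈ S, B γ s = 0) → τ - γ ∈ posCone H Φpos

/-- The sequence `r 1, …, r k` of mutually orthogonal long roots of the paper:
`r 1 = α₀` is the highest root, and inductively `r i` is a highest long root
orthogonal to `r 1, …, r (i-1)`. -/
def IsOrthogonalRootSeq (Φ Φpos : Finset (Module.Dual ℂ H))
    (B : Module.Dual ℂ H → Module.Dual ℂ H → ℚ)
    (r : ℕ → Module.Dual ℂ H) (k : ℕ) : Prop :=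
  IsHighestRootOf H Φ Φpos (r 1) ∧
    ∀ i, 2 ≤ i → i ≤ k →
      IsHighestLongRootOrtho H Φ Φpos B {s | ∃ j, 1 ≤ j ∧ j < i ∧ s = r j} (r i)

/-- `σ` is a dominant (integral) weight: it pairs with the coroot of every positive
root in a nonnegative integer. -/
def IsDominantOf (Φpos : Finset (Module.Dual ℂ H))
    (B : Module.Dual ℂ H → Module.Dual ℂ H → ℚ) (σ : Module.Dual ℂ H) : Prop :=
  ∀ μ ∈ Φpos, ∃ n : ℕ, 2 * B σ μ = n * B μ μ

section RootSet

variable {V : Type*} [AddCommGroup V]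

structure IsRootSet (Φ : Finset V) (B : V →+ V →+ ℚ) : Prop where
  symm : ∀ x y, B x y = B y x
  pos : ∀ a ∈ Φ, 0 < B a a
  exists_two_mul_eq : ∀ a ∈ Φ, ∀ b ∈ Φ, ∃ n : ℤ, 2 * B a b = n * B b b
  sub_zsmul_mem : ∀ a ∈ Φ, ∀ b ∈ Φ, ∀ n : ℤ, 2 * B a b = n * B b b → a - n • b ∈ Φ
  add_mem_of_neg : ∀ a ∈ Φ, ∀ b ∈ Φ, B a b < 0 → a ≠ -b → a + b ∈ Φ

structure IsPositiveSystem (Φ Φpos : Finset V) : Prop where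
  subset : Φpos ⊆ Φ
  mem_iff_neg_notMem : ∀ a ∈ Φ, (a ∈ Φpos ↔ -a ∉ Φpos)
  add_mem : ∀ a ∈ Φpos, ∀ b ∈ Φpos, a + b ∈ Φ → a + b ∈ Φpos

structure IsHighestRoot (Φ Φpos : Finset V) (α₀ : V) : Prop where
  mem : α₀ ∈ Φ
  sub_mem_closure : ∀ γ ∈ Φ, α₀ - γ ∈ AddSubmonoid.closure (Φpos : Set V)

variable {Φ Φpos : Finset V} {B : V →+ V →+ ℚ}

lemma apply_sub_zsmul_self (hB : ∀ x y, B x y = B y x) {a b : V} {n : ℤ}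
    (hn : 2 * B a b = n * B b b) : B (a - n • b) (a - n • b) = B a a := by
  simp only [map_sub, map_zsmul, AddMonoidHom.sub_apply, AddMonoidHom.zsmul_apply, zsmul_eq_mul,
    hB b a]
  linear_combination (-(n : ℚ)) * hn

namespace IsRootSet

lemma zero_notMem (hΦ : IsRootSet Φ B) : (0 : V) ∉ Φ := fun h => by
  simpa using hΦ.pos 0 h

lemma neg_mem (hΦ : IsRootSet Φ B) {a : V} (ha : a ∈ Φ) : -a ∈ Φ := by
  have := hΦ.sub_zsmul_mem a ha a ha 2 (by push_cast; ring)
  rwa [two_zsmul, sub_add_cancel_left] at this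

lemma multiset_sum_ne_zero (hΦ : IsRootSet Φ B) (hP : IsPositiveSystem Φ Φpos)
    {m : Multiset V} (hm0 : m ≠ 0) (hm : ∀ p ∈ m, p ∈ Φpos) : m.sum ≠ 0 := by
  obtain ⟨n, hn⟩ : ∃ n, Multiset.card m = n + 1 :=
    Nat.exists_eq_add_one.mpr (Multiset.card_pos.mpr hm0)
  induction n generalizing m with
  | zero =>
    obtain ⟨p, rfl⟩ := Multiset.card_eq_one.mp hn
    intro h
    exact hΦ.zero_notMem (hP.subset (by simpa [← h] using hm p))
  | succ n ih =>
    intro hsum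
    obtain ⟨p, hp⟩ := Multiset.card_pos_iff_exists_mem.mp (by omega : 0 < Multiset.card m)
    obtain ⟨m₁, rfl⟩ := Multiset.exists_cons_of_mem hp
    have hpP := hm p (Multiset.mem_cons_self p m₁)
    -- `(m.sum, p) = 0 < (p, p)` forces a summand `q` with `(q, p) < 0`; then `p + q` is a
    -- positive root, and replacing `p, q` by it shortens `m`
    obtain ⟨q, hq, hqp⟩ : ∃ q ∈ m₁, B q p < 0 := by
      by_contra! h
      have h₁ : 0 ≤ (m₁.map (B.flip p)).sum := Multiset.sum_nonneg fun x hx => by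
        obtain ⟨q, hq, rfl⟩ := Multiset.mem_map.mp hx
        exact h q hq
      have h₂ : B.flip p (p ::ₘ m₁).sum = 0 := by rw [hsum, map_zero]
      rw [Multiset.sum_cons, map_add, map_multiset_sum] at h₂
      have := hΦ.pos p (hP.subset hpP)
      simp only [AddMonoidHom.flip_apply] at h₂ h₁
      linarith
    obtain ⟨m₂, rfl⟩ := Multiset.exists_cons_of_mem hq
    have hqP := hm q (by simp)
    have hqp' : q ≠ -p := fun h =>
      (hP.mem_iff_neg_notMem p (hP.subset hpP)).mp hpP (h ▸ hqP)
    have hsumP : q + p ∈ Φpos :=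
      hP.add_mem q hqP p hpP (hΦ.add_mem_of_neg q (hP.subset hqP) p (hP.subset hpP) hqp hqp')
    refine ih (m := (q + p) ::ₘ m₂) (Multiset.cons_ne_zero) ?_ ?_ ?_
    · intro x hx
      rcases Multiset.mem_cons.mp hx with rfl | hx
      · exact hsumP
      · exact hm x (by simp [hx])
    · simp only [Multiset.card_cons] at hn ⊢; omega
    · rw [← hsum]; simp only [Multiset.sum_cons]; abel

lemma eq_zero_of_mem_closure_of_neg_mem_closure (hΦ : IsRootSet Φ B)
    (hP : IsPositiveSystem Φ Φpos) {x : V} (hx : x ∈ AddSubmonoid.closure (Φpos : Set V))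
    (hnx : -x ∈ AddSubmonoid.closure (Φpos : Set V)) : x = 0 := by
  obtain ⟨m₁, hm₁, rfl⟩ := AddSubmonoid.exists_multiset_of_mem_closure hx
  obtain ⟨m₂, hm₂, hs₂⟩ := AddSubmonoid.exists_multiset_of_mem_closure hnx
  have hm : ∀ p ∈ m₁ + m₂, p ∈ Φpos := fun p hp =>
    (Multiset.mem_add.mp hp).elim (hm₁ p) (hm₂ p)
  have hsum : (m₁ + m₂).sum = 0 := by rw [Multiset.sum_add, hs₂, add_neg_cancel]
  have : m₁ + m₂ = 0 := by
    by_contra h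
    exact hΦ.multiset_sum_ne_zero hP h hm hsum
  rw [(add_eq_zero.mp this).1, Multiset.sum_zero]

lemma apply_nonneg_of_mem_closure {y : V} (hy : ∀ σ ∈ Φpos, 0 ≤ B σ y) {x : V}
    (hx : x ∈ AddSubmonoid.closure (Φpos : Set V)) : 0 ≤ B x y := by
  induction hx using AddSubmonoid.closure_induction with
  | mem z hz => exact hy z hz
  | zero => simp
  | add p q _ _ hp hq => simpa using add_nonneg hp hq

/-- Otherwise reflecting `τ` in `σ` would give a root of the same length higher than `τ`. -/
lemma apply_nonneg_of_forall_sub_mem_closure (hΦ : IsRootSet Φ B)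
    (hP : IsPositiveSystem Φ Φpos) {τ : V} (hτ : τ ∈ Φ)
    (hdom : ∀ γ ∈ Φ, B γ γ = B τ τ → τ - γ ∈ AddSubmonoid.closure (Φpos : Set V))
    {σ : V} (hσ : σ ∈ Φpos) : 0 ≤ B σ τ := by
  by_contra! hστ
  have hσΦ := hP.subset hσ
  have hσσ := hΦ.pos σ hσΦ
  obtain ⟨k, hk⟩ := hΦ.exists_two_mul_eq τ hτ σ hσΦ
  have hk0 : (k : ℚ) < 0 := by rw [hΦ.symm] at hστ; nlinarith
  have hkσ : k • σ ∈ AddSubmonoid.closure (Φpos : Set V) := by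
    simpa using hdom _ (hΦ.sub_zsmul_mem τ hτ σ hσΦ k hk) (apply_sub_zsmul_self hΦ.symm hk)
  have hnkσ : -(k • σ) ∈ AddSubmonoid.closure (Φpos : Set V) := by
    have hk0' : 0 ≤ -k := by exact_mod_cast (neg_pos.mpr hk0).le
    rw [← neg_zsmul, ← Int.toNat_of_nonneg hk0', natCast_zsmul]
    exact AddSubmonoid.nsmul_mem _ (AddSubmonoid.subset_closure hσ) _
  have h0 := congrArg (B · σ) (hΦ.eq_zero_of_mem_closure_of_neg_mem_closure hP hkσ hnkσ)
  simp only [map_zsmul, AddMonoidHom.zsmul_apply, zsmul_eq_mul, map_zero,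
    AddMonoidHom.zero_apply] at h0
  nlinarith

section Highest

variable {α₀ : V}

lemma highest_mem_pos (hΦ : IsRootSet Φ B) (hP : IsPositiveSystem Φ Φpos)
    (hα₀ : IsHighestRoot Φ Φpos α₀) : α₀ ∈ Φpos := by
  by_contra h
  have hneg : -α₀ ∈ Φpos := by simpa [h] using hP.mem_iff_neg_notMem α₀ hα₀.mem
  have hmem : -α₀ + -α₀ ∈ AddSubmonoid.closure (Φpos : Set V) :=
    add_mem (AddSubmonoid.subset_closure hneg) (AddSubmonoid.subset_closure hneg)
  have h2 : α₀ + α₀ = 0 := hΦ.eq_zero_of_mem_closure_of_neg_mem_closure hP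
    (by simpa using hα₀.sub_mem_closure _ (hP.subset hneg)) (by rwa [neg_add])
  have h3 := congrArg (B · α₀) h2
  have := hΦ.pos α₀ hα₀.mem
  simp only [map_add, AddMonoidHom.add_apply, map_zero, AddMonoidHom.zero_apply] at h3
  linarith

lemma apply_highest_le (hΦ : IsRootSet Φ B) (hP : IsPositiveSystem Φ Φpos)
    (hα₀ : IsHighestRoot Φ Φpos α₀) {μ : V} (hμ : μ ∈ Φ) :
    B μ α₀ ≤ B α₀ α₀ := by
  have := apply_nonneg_of_mem_closure (fun σ hσ => hΦ.apply_nonneg_of_forall_sub_mem_closure hP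
    hα₀.mem (fun γ hγ _ => hα₀.sub_mem_closure γ hγ) hσ) (hα₀.sub_mem_closure μ hμ)
  simpa using this

lemma eq_of_apply_highest_eq (hΦ : IsRootSet Φ B) (hP : IsPositiveSystem Φ Φpos)
    (hα₀ : IsHighestRoot Φ Φpos α₀) {μ : V} (hμ : μ ∈ Φ)
    (heq : B μ α₀ = B α₀ α₀) : μ = α₀ := by
  have hrefl : -(μ - (2 : ℤ) • α₀) ∈ Φ :=
    hΦ.neg_mem (hΦ.sub_zsmul_mem μ hμ α₀ hα₀.mem 2 (by rw [heq]; push_cast; ring))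
  have h := hα₀.sub_mem_closure _ hrefl
  rw [show α₀ - -(μ - (2 : ℤ) • α₀) = -(α₀ - μ) by rw [two_zsmul]; abel] at h
  exact (sub_eq_zero.mp
    (hΦ.eq_zero_of_mem_closure_of_neg_mem_closure hP (hα₀.sub_mem_closure μ hμ) h)).symm

lemma abs_apply_highest_lt (hΦ : IsRootSet Φ B) (hP : IsPositiveSystem Φ Φpos)
    (hα₀ : IsHighestRoot Φ Φpos α₀) {μ : V} (hμ : μ ∈ Φ)
    (hμ₁ : μ ≠ α₀) (hμ₂ : μ ≠ -α₀) : |B μ α₀| < B α₀ α₀ := by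
  have hle := hΦ.apply_highest_le hP hα₀ hμ
  have hle' := hΦ.apply_highest_le hP hα₀ (hΦ.neg_mem hμ)
  have hne := mt (hΦ.eq_of_apply_highest_eq hP hα₀ hμ) hμ₁
  have hne' := mt (hΦ.eq_of_apply_highest_eq hP hα₀ (hΦ.neg_mem hμ))
    (fun h => hμ₂ (neg_eq_iff_eq_neg.mp h))
  simp only [map_neg, AddMonoidHom.neg_apply] at hle' hne'
  rw [abs_lt]
  constructor
  · exact lt_of_le_of_ne (by linarith) (fun h => hne' (by linarith))
  · exact lt_of_le_of_ne hle hne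

lemma mem_pos_of_apply_highest_pos (hΦ : IsRootSet Φ B) (hP : IsPositiveSystem Φ Φpos)
    (hα₀ : IsHighestRoot Φ Φpos α₀) {μ : V} (hμ : μ ∈ Φ) (hpos : 0 < B μ α₀) : μ ∈ Φpos := by
  by_contra h
  have hneg : -μ ∈ Φpos := by simpa [h] using hP.mem_iff_neg_notMem μ hμ
  have := hΦ.apply_nonneg_of_forall_sub_mem_closure hP hα₀.mem
    (fun γ hγ _ => hα₀.sub_mem_closure γ hγ) hneg
  simp only [map_neg, AddMonoidHom.neg_apply] at this
  linarith

/-- The Cartan integer `2(δ, α₀)/(α₀, α₀)` is `0` or `±1` since `δ ≠ ±α₀`, so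
`|2(δ, α₀)| ≤ (α₀, α₀) < (δ, δ)`, and then `2(δ, α₀)/(δ, δ)` can only be an integer if it is `0`. -/
lemma apply_highest_eq_zero_of_lt (hΦ : IsRootSet Φ B) (hP : IsPositiveSystem Φ Φpos)
    (hα₀ : IsHighestRoot Φ Φpos α₀) {δ : V} (hδ : δ ∈ Φ) (hlt : B α₀ α₀ < B δ δ) :
    B δ α₀ = 0 := by
  have hne : ∀ {μ}, μ = α₀ ∨ μ = -α₀ → B μ μ = B α₀ α₀ := by
    rintro μ (rfl | rfl) <;> simp
  have habs := hΦ.abs_apply_highest_lt hP hα₀ hδ (fun h => hlt.ne' (hne (.inl h)))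
    (fun h => hlt.ne' (hne (.inr h)))
  obtain ⟨n, hn⟩ := hΦ.exists_two_mul_eq δ hδ α₀ hα₀.mem
  obtain ⟨m, hm⟩ := hΦ.exists_two_mul_eq α₀ hα₀.mem δ hδ
  rw [hΦ.symm] at hm
  have ha := hΦ.pos α₀ hα₀.mem
  have hn1 : |(n : ℚ)| ≤ 1 := by
    have : |(n : ℚ)| * B α₀ α₀ < 2 * B α₀ α₀ := by
      rw [← abs_of_pos ha, ← abs_mul, ← hn, abs_mul, abs_two, abs_of_pos ha]; linarith
    have : |n| < 2 := by exact_mod_cast (lt_of_mul_lt_mul_right this ha.le)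
    exact_mod_cast (by omega : |n| ≤ 1)
  by_contra h0
  have hm1 : 1 ≤ |(m : ℚ)| := by
    have : m ≠ 0 := by rintro rfl; simp at hm; exact h0 hm
    exact_mod_cast Int.one_le_abs this
  have := congrArg abs (hn.symm.trans hm)
  rw [abs_mul, abs_mul, abs_of_pos ha, abs_of_pos (ha.trans hlt)] at this
  nlinarith

/-- If a root `τ` orthogonal to `α₀` were longer than `α₀`, then every root of its length would
be orthogonal to `α₀`; `τ` would then dominate all of them, hence be dominant, and
`0 ≤ (α₀ - τ, τ) = -(τ, τ)` is absurd. -/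
lemma apply_self_le_highest (hΦ : IsRootSet Φ B) (hP : IsPositiveSystem Φ Φpos)
    (hα₀ : IsHighestRoot Φ Φpos α₀) {τ : V} (hτ : τ ∈ Φ) (horth : B τ α₀ = 0)
    (hdom : ∀ γ ∈ Φ, B γ γ = B τ τ → B γ α₀ = 0 →
      τ - γ ∈ AddSubmonoid.closure (Φpos : Set V)) :
    B τ τ ≤ B α₀ α₀ := by
  by_contra! hlt
  have hτdom : ∀ σ ∈ Φpos, 0 ≤ B σ τ := fun σ hσ =>
    hΦ.apply_nonneg_of_forall_sub_mem_closure hP hτ (fun γ hγ hlen =>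
      hdom γ hγ hlen (hΦ.apply_highest_eq_zero_of_lt hP hα₀ hγ (hlen ▸ hlt))) hσ
  have := apply_nonneg_of_mem_closure hτdom (hα₀.sub_mem_closure τ hτ)
  rw [map_sub, AddMonoidHom.sub_apply, hΦ.symm, horth] at this
  linarith [hΦ.pos τ hτ]

lemma filter_apply_highest_ne_zero (hΦ : IsRootSet Φ B) (hP : IsPositiveSystem Φ Φpos)
    (hα₀ : IsHighestRoot Φ Φpos α₀) :
    Φpos.filter (fun μ => B μ α₀ ≠ 0) =
      insert α₀ (Φ.filter fun μ => 2 * B μ α₀ = B α₀ α₀) := by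
  have ha := hΦ.pos α₀ hα₀.mem
  ext μ
  simp only [mem_filter, mem_insert]
  constructor
  · rintro ⟨hμ, hne⟩
    by_cases hμα₀ : μ = α₀
    · exact .inl hμα₀
    refine .inr ⟨hP.subset hμ, ?_⟩
    have hnonneg := hΦ.apply_nonneg_of_forall_sub_mem_closure hP hα₀.mem
      (fun γ hγ _ => hα₀.sub_mem_closure γ hγ) hμ
    have habs := hΦ.abs_apply_highest_lt hP hα₀ (hP.subset hμ) hμα₀
      (fun h => (hP.mem_iff_neg_notMem α₀ hα₀.mem).mp (hΦ.highest_mem_pos hP hα₀) (h ▸ hμ))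
    rw [abs_of_nonneg hnonneg] at habs
    obtain ⟨n, hn⟩ := hΦ.exists_two_mul_eq μ (hP.subset hμ) α₀ hα₀.mem
    have h0 : 0 < n := by
      have : (0 : ℚ) < n * B α₀ α₀ := by
        rw [← hn]; linarith [lt_of_le_of_ne hnonneg (Ne.symm hne)]
      exact_mod_cast pos_of_mul_pos_left this ha.le
    have h2 : n < 2 := by
      have : (n : ℚ) * B α₀ α₀ < 2 * B α₀ α₀ := by rw [← hn]; linarith
      exact_mod_cast lt_of_mul_lt_mul_right this ha.le
    obtain rfl : n = 1 := by omega
    simpa using hn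
  · rintro (rfl | ⟨hμ, hμ₂⟩)
    · exact ⟨hΦ.highest_mem_pos hP hα₀, ha.ne'⟩
    · exact ⟨hΦ.mem_pos_of_apply_highest_pos hP hα₀ hμ (by linarith), by linarith⟩

lemma two_mul_sum_apply_highest (hΦ : IsRootSet Φ B) (hP : IsPositiveSystem Φ Φpos)
    (hα₀ : IsHighestRoot Φ Φpos α₀) :
    2 * ∑ μ ∈ Φpos, B μ α₀ =
      B α₀ α₀ * (#(Φ.filter fun μ => 2 * B μ α₀ = B α₀ α₀) + 2) := by
  have hnotMem : α₀ ∉ Φ.filter fun μ => 2 * B μ α₀ = B α₀ α₀ := by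
    simp [(hΦ.pos α₀ hα₀.mem).ne']
  rw [← sum_filter_ne_zero, hΦ.filter_apply_highest_ne_zero hP hα₀, sum_insert hnotMem,
    mul_add, mul_sum, sum_congr rfl fun μ hμ => (mem_filter.mp hμ).2, sum_const, nsmul_eq_mul]
  ring

/-- The positive roots not orthogonal to `α₀` are `α₀` and the roots of level one, which
`μ ↦ α₀ - μ` permutes. -/
lemma sum_apply_eq_sum_filter_of_orthogonal (hΦ : IsRootSet Φ B) (hP : IsPositiveSystem Φ Φpos)
    (hα₀ : IsHighestRoot Φ Φpos α₀) {y : V} (hy : B α₀ y = 0) :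
    ∑ μ ∈ Φpos, B μ y = ∑ μ ∈ Φpos.filter (fun μ => B μ α₀ = 0), B μ y := by
  set T := Φ.filter fun μ => 2 * B μ α₀ = B α₀ α₀
  have hT : ∀ μ ∈ T, α₀ - μ ∈ T := by
    intro μ hμ
    obtain ⟨hμΦ, hμ₁⟩ := mem_filter.mp hμ
    have hrefl := hΦ.neg_mem (hΦ.sub_zsmul_mem μ hμΦ α₀ hα₀.mem 1 (by simpa using hμ₁))
    refine mem_filter.mpr ⟨by simpa using hrefl, ?_⟩
    simp only [map_sub, AddMonoidHom.sub_apply]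
    linarith
  have hswap : ∑ μ ∈ T, B (α₀ - μ) y = ∑ μ ∈ T, B μ y :=
    sum_nbij' (α₀ - ·) (α₀ - ·) hT hT (fun _ _ => sub_sub_cancel _ _)
      (fun _ _ => sub_sub_cancel _ _) (fun _ _ => rfl)
  have hT0 : ∑ μ ∈ T, B μ y = 0 := by
    simp only [map_sub, AddMonoidHom.sub_apply, hy, zero_sub, sum_neg_distrib] at hswap
    linarith
  have hnotMem : α₀ ∉ T := by simp [T, (hΦ.pos α₀ hα₀.mem).ne']
  rw [← sum_filter_add_sum_filter_not Φpos (fun μ => B μ α₀ = 0)]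
  rw [show Φpos.filter (fun μ => ¬B μ α₀ = 0) = insert α₀ T from
    hΦ.filter_apply_highest_ne_zero hP hα₀, sum_insert hnotMem, hT0, hy, add_zero, add_zero]

lemma apply_highest_self_mul_eq_one (hΦ : IsRootSet Φ B) (hP : IsPositiveSystem Φ Φpos)
    (hα₀ : IsHighestRoot Φ Φpos α₀) {v : ℕ}
    (hv : #(Φ.filter fun μ => 2 * B μ α₀ = B α₀ α₀) = 2 * v)
    (hnorm : B (α₀ + ∑ μ ∈ Φpos, μ) α₀ = 1) : B α₀ α₀ * (v + 2) = 1 := by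
  have hρ := hΦ.two_mul_sum_apply_highest hP hα₀
  rw [hv, Nat.cast_mul, Nat.cast_ofNat] at hρ
  simp only [map_add, map_sum, AddMonoidHom.add_apply, AddMonoidHom.finsetSum_apply] at hnorm
  linear_combination hnorm - hρ / 2

lemma casimir_two_highest (hΦ : IsRootSet Φ B) (hP : IsPositiveSystem Φ Φpos)
    (hα₀ : IsHighestRoot Φ Φpos α₀) {v : ℕ}
    (hv : #(Φ.filter fun μ => 2 * B μ α₀ = B α₀ α₀) = 2 * v)
    (hnorm : B (α₀ + ∑ μ ∈ Φpos, μ) α₀ = 1) :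
    B (α₀ + α₀ + ∑ μ ∈ Φpos, μ) (α₀ + α₀) = 2 * (v + 3) / (v + 2) := by
  have ha := hΦ.apply_highest_self_mul_eq_one hP hα₀ hv hnorm
  simp only [map_add, map_sum, AddMonoidHom.add_apply, AddMonoidHom.finsetSum_apply] at hnorm ⊢
  rw [eq_div_iff (by positivity)]
  linear_combination 2 * (v + 2) * hnorm + 2 * ha

lemma casimir_highest_add (hΦ : IsRootSet Φ B) (hP : IsPositiveSystem Φ Φpos)
    (hα₀ : IsHighestRoot Φ Φpos α₀) {v : ℕ}
    (hv : #(Φ.filter fun μ => 2 * B μ α₀ = B α₀ α₀) = 2 * v)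
    (hnorm : B (α₀ + ∑ μ ∈ Φpos, μ) α₀ = 1) {τ : V} (horth : B τ α₀ = 0)
    (hlong : B τ τ = B α₀ α₀) {h : ℚ}
    (hh : B (τ + ∑ μ ∈ Φpos.filter fun μ => B μ α₀ = 0, μ) τ = h * B τ τ) :
    B (α₀ + τ + ∑ μ ∈ Φpos, μ) (α₀ + τ) = (v + h + 2) / (v + 2) := by
  have ha := hΦ.apply_highest_self_mul_eq_one hP hα₀ hv hnorm
  have horth' : B α₀ τ = 0 := by rw [hΦ.symm]; exact horth
  have hρτ := hΦ.sum_apply_eq_sum_filter_of_orthogonal hP hα₀ horth'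
  simp only [map_add, map_sum, AddMonoidHom.add_apply, AddMonoidHom.finsetSum_apply,
    ← hρτ, hlong, horth, horth'] at hnorm hh ⊢
  rw [eq_div_iff (by positivity)]
  linear_combination (v + 2) * hnorm + (v + 2) * hh + h * ha

end Highest
end IsRootSet
end RootSet

lemma vogel_parameters {X Y h v α β γ t : ℚ} (hv : 0 ≤ v)
    (hX : X = 2 * (v + 3) / (v + 2)) (hY : Y = (v + h + 2) / (v + 2))
    (hα : α = -2) (ht : t = α + β + γ)
    (hCartan : 2 * t * X = 2 * (2 * t - α)) (hY2 : 2 * t * Y = 2 * (2 * t - β)) :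
    β = v - h + 2 ∧ γ = h + 2 ∧ t = v + 2 := by
  have hv2 : v + 2 ≠ 0 := by positivity
  have htv : t = v + 2 := by
    rw [hX, hα] at hCartan
    field_simp at hCartan
    linarith
  have hβ : β = v - h + 2 := by
    rw [hY, htv] at hY2
    field_simp at hY2
    linarith
  exact ⟨hβ, by linarith, htv⟩

variable {H}

lemma IsHighestRootOf.isHighestRoot {Φ Φpos : Finset (Module.Dual ℂ H)} {α₀ : Module.Dual ℂ H}
    (hα₀ : IsHighestRootOf H Φ Φpos α₀) : IsHighestRoot Φ Φpos α₀ :=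
  ⟨hα₀.1, fun γ hγ => AddSubmonoid.closure_mono (fun _ hμ => hμ.1) (hα₀.2 γ hγ)⟩

lemma IsHighestLongRootOrtho.apply_self_eq_highest {Φ Φpos : Finset (Module.Dual ℂ H)}
    {B : Module.Dual ℂ H →+ Module.Dual ℂ H →+ ℚ} {α₀ τ : Module.Dual ℂ H}
    (hτ : IsHighestLongRootOrtho H Φ Φpos (fun x y => B x y) {α₀} τ) (hΦ : IsRootSet Φ B)
    (hP : IsPositiveSystem Φ Φpos) (hα₀ : IsHighestRoot Φ Φpos α₀) : B τ τ = B α₀ α₀ := by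
  refine le_antisymm (hΦ.apply_self_le_highest hP hα₀ hτ.1.1 (hτ.2.1 α₀ rfl)
    fun γ hγ hlen hγα₀ => ?_) (hτ.1.2 α₀ hα₀.mem)
  exact AddSubmonoid.closure_mono (fun _ hμ => hμ.1)
    (hτ.2.2 γ ⟨hγ, fun δ hδ => (hτ.1.2 δ hδ).trans_eq hlen.symm⟩ (by simpa using hγα₀))

section Level

variable {s : Finset (Module.Dual ℂ H)} {B : Module.Dual ℂ H →+ Module.Dual ℂ H →+ ℚ}
  {α₀ : Module.Dual ℂ H} {x : H}

lemma filter_apply_eq_one (ha : B α₀ α₀ ≠ 0)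
    (hx : ∀ μ ∈ s, (B α₀ α₀ : ℂ) * μ x = 2 * B μ α₀) :
    s.filter (fun μ => μ x = 1) = s.filter (fun μ => 2 * B μ α₀ = B α₀ α₀) :=
  filter_congr fun μ hμ => by
    rw [← mul_right_inj' (by exact_mod_cast ha : (B α₀ α₀ : ℂ) ≠ 0), hx μ hμ, mul_one]
    norm_cast

lemma filter_apply_eq_zero (ha : B α₀ α₀ ≠ 0)
    (hx : ∀ μ ∈ s, (B α₀ α₀ : ℂ) * μ x = 2 * B μ α₀) :
    s.filter (fun μ => μ x = 0) = s.filter (fun μ => B μ α₀ = 0) :=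
  filter_congr fun μ hμ => by
    rw [← mul_right_inj' (by exact_mod_cast ha : (B α₀ α₀ : ℂ) ≠ 0), hx μ hμ, mul_zero]
    simp

end Level

section Killing
variable [FiniteDimensional ℂ L] [H.IsCartanSubalgebra] [LieAlgebra.IsKilling ℂ L]
open LieAlgebra LieModule IsKilling

lemma rootSpace'_eq (f : Module.Dual ℂ H) :
    rootSpace' H f = (rootSpace H ⇑f : Submodule ℂ L) := by
  ext x
  refine ⟨fun hx => ?_, fun hx y => lie_eq_smul_of_mem_rootSpace hx y⟩
  rw [LieSubmodule.mem_toSubmodule, mem_genWeightSpace]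
  intro y
  refine ⟨1, ?_⟩
  simp [hx y]

lemma isRootOf_iff (f : Module.Dual ℂ H) : IsRootOf H f ↔ f ≠ 0 ∧ rootSpace H ⇑f ≠ ⊥ := by
  simp only [IsRootOf, rootSpace'_eq, ne_eq, LieSubmodule.toSubmodule_eq_bot]

lemma isRootOf_iff_exists_weight (f : Module.Dual ℂ H) :
    IsRootOf H f ↔ ∃ w : Weight ℂ H L, w.IsNonZero ∧ (w : Module.Dual ℂ H) = f := by
  rw [isRootOf_iff]
  constructor
  · rintro ⟨hf, hroot⟩
    refine ⟨⟨f, hroot⟩, fun h => hf ?_, rfl⟩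
    ext x; exact congrFun h x
  · rintro ⟨w, hw, rfl⟩
    exact ⟨by rwa [ne_eq, Weight.coe_toLinear_eq_zero_iff], w.genWeightSpace_ne_bot⟩

/-- On roots, `B` is `c` times the form `(u, w) ↦ u(t_w)` induced by the Killing form, where
`t_w ∈ H` is dual to `w`. -/
def IsKillingMultipleOnRoots (B : Module.Dual ℂ H →+ Module.Dual ℂ H →+ ℚ) (c : ℚ) : Prop :=
  ∀ u w : Weight ℂ H L, u.IsNonZero → w.IsNonZero →
    (B u w : ℂ) = c * u ((cartanEquivDual H).symm w)

variable {B : Module.Dual ℂ H →+ Module.Dual ℂ H →+ ℚ} {c : ℚ}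

lemma apply_coroot_mul_eq
    (hB : IsKillingMultipleOnRoots B c)
    {u w : Weight ℂ H L} (hu : u.IsNonZero) (hw : w.IsNonZero) :
    u (coroot w) * B w w = 2 * B u w := by
  have hww := root_apply_cartanEquivDual_symm_ne_zero hw
  rw [hB u w hu hw, hB w w hw hw, coroot, map_nsmul, map_smul, smul_eq_mul, nsmul_eq_mul]
  field_simp
  ring

lemma killingForm_apply_self_eq_sum (x : H) :
    killingForm ℂ L x x = ∑ u ∈ H.root, u x * u x := by
  have := LinearMap.congr_fun₂ (restrict_killingForm_eq_sum (K := ℂ) (H := H)) x x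
  simp only [LinearMap.sum_apply, LinearMap.smulRight_apply, LinearMap.smul_apply,
    smul_eq_mul] at this
  exact this

lemma killingForm_cartanEquivDual_symm_apply (f : Module.Dual ℂ H) (x : H) :
    killingForm ℂ L ((cartanEquivDual H).symm f : L) x = f x := by
  conv_rhs => rw [← LinearEquiv.apply_symm_apply (cartanEquivDual H) f]
  rfl

lemma apply_self_pos
    (hB : IsKillingMultipleOnRoots B c)
    (hc : 0 < c) {w : Weight ℂ H L} (hw : w.IsNonZero) : 0 < B w w := by
  -- with `t` dual to `w`: `c (w, w) = c² κ(t, t) = ∑ᵤ (c u(t))² = ∑ᵤ (u, w)²`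
  have hsum : ((c * B w w : ℚ) : ℂ) = ((∑ u ∈ H.root, B u w ^ 2 : ℚ) : ℂ) := by
    have ht : w ((cartanEquivDual H).symm w) = ∑ u ∈ H.root,
        u ((cartanEquivDual H).symm w) * u ((cartanEquivDual H).symm w) := by
      rw [← killingForm_apply_self_eq_sum, killingForm_cartanEquivDual_symm_apply]; rfl
    push_cast
    rw [sum_congr rfl fun u hu => by rw [hB u w (by simpa using hu) hw], hB w w hw hw, ht]
    simp only [mul_sum]
    exact sum_congr rfl fun u _ => by ring
  have hnonneg : 0 ≤ c * B w w := by
    rw [(by exact_mod_cast hsum : c * B w w = _)]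
    exact sum_nonneg fun u _ => sq_nonneg _
  have hne : B w w ≠ 0 := by
    intro h0
    have h := hB w w hw hw
    rw [h0, Rat.cast_zero, eq_comm, mul_eq_zero, Rat.cast_eq_zero] at h
    exact h.elim hc.ne' (root_apply_cartanEquivDual_symm_ne_zero hw)
  exact lt_of_le_of_ne ((mul_nonneg_iff_of_pos_left hc).mp hnonneg) hne.symm

lemma two_mul_apply_eq_chainCoeff_mul
    (hB : IsKillingMultipleOnRoots B c)
    {u w : Weight ℂ H L} (hu : u.IsNonZero) (hw : w.IsNonZero) :
    2 * B u w = ((chainBotCoeff w u : ℤ) - chainTopCoeff w u : ℤ) * B w w := by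
  have h := apply_coroot_mul_eq hB hu hw
  rw [apply_coroot_eq_cast] at h
  exact_mod_cast h.symm

lemma isRootOf_sub_zsmul
    (hB : IsKillingMultipleOnRoots B c)
    (hc : 0 < c) {u w : Weight ℂ H L} (hu : u.IsNonZero) (hw : w.IsNonZero) {n : ℤ}
    (hn : 2 * B u w = n * B w w) : IsRootOf H (u - n • (w : Module.Dual ℂ H)) := by
  have hcoroot : u (coroot w) = n := by
    have h := apply_coroot_mul_eq hB hu hw
    rw [(by exact_mod_cast hn : (2 * B u w : ℂ) = n * B w w)] at h
    exact mul_right_cancel₀ (by exact_mod_cast (apply_self_pos hB hc hw).ne') h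
  refine (isRootOf_iff_exists_weight _).mpr ⟨reflectRoot w u, reflectRoot_isNonZero w u hu, ?_⟩
  ext x
  simp [reflectRoot, hcoroot]

lemma isRootOf_add
    (hB : IsKillingMultipleOnRoots B c)
    (hc : 0 < c) {u w : Weight ℂ H L} (hu : u.IsNonZero) (hw : w.IsNonZero)
    (hneg : B u w < 0) (hne : (u : Module.Dual ℂ H) ≠ -w) :
    IsRootOf H (u + (w : Module.Dual ℂ H)) := by
  have hchain := two_mul_apply_eq_chainCoeff_mul hB hu hw
  have htop : (1 : ℤ) ≤ chainTopCoeff w u := by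
    have : (((chainBotCoeff w u : ℤ) - chainTopCoeff w u : ℤ) : ℚ) < 0 := by
      nlinarith [apply_self_pos hB hc hw]
    have : (chainBotCoeff w u : ℤ) - chainTopCoeff w u < 0 := by exact_mod_cast this
    omega
  have hroot := (rootSpace_zsmul_add_ne_bot_iff w u hw 1).mpr ⟨htop, by omega⟩
  refine (isRootOf_iff _).mpr ⟨fun h => hne (eq_neg_of_add_eq_zero_left h), ?_⟩
  have hfun : (⇑(u + (w : Module.Dual ℂ H)) : H → ℂ) = (1 : ℤ) • ⇑w + ⇑u := by
    ext x; simp [add_comm]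
  rwa [hfun]

lemma tcov_eq_cartanEquivDual_symm {tcov : Module.Dual ℂ H → H}
    (htcov : ∀ (a : Module.Dual ℂ H) (h : H), killingForm ℂ L (tcov a : L) (h : L) = a h)
    (a : Module.Dual ℂ H) : tcov a = (cartanEquivDual H).symm a := by
  rw [LinearEquiv.eq_symm_apply]
  ext x
  exact htcov a x

lemma isRootSet_of_killing {Φ : Finset (Module.Dual ℂ H)} (hΦ : ∀ a, a ∈ Φ ↔ IsRootOf H a)
    (hsymm : ∀ x y, B x y = B y x) {tcov : Module.Dual ℂ H → H}
    (htcov : ∀ (a : Module.Dual ℂ H) (h : H), killingForm ℂ L (tcov a : L) (h : L) = a h)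
    (hc : 0 < c) (hBkill : ∀ a ∈ Φ, ∀ b ∈ Φ, (B a b : ℂ) = c * a (tcov b)) :
    IsRootSet Φ B := by
  have hweight : ∀ a ∈ Φ, ∃ w : Weight ℂ H L, w.IsNonZero ∧ (w : Module.Dual ℂ H) = a :=
    fun a ha => (isRootOf_iff_exists_weight a).mp ((hΦ a).mp ha)
  have hB : IsKillingMultipleOnRoots B c := fun u w hu hw => by
    have hmem : ∀ w : Weight ℂ H L, w.IsNonZero → (w : Module.Dual ℂ H) ∈ Φ :=
      fun w hw => (hΦ _).mpr ((isRootOf_iff_exists_weight _).mpr ⟨w, hw, rfl⟩)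
    rw [hBkill _ (hmem u hu) _ (hmem w hw), tcov_eq_cartanEquivDual_symm htcov]
    rfl
  refine ⟨hsymm, fun a ha => ?_, fun a ha b hb => ?_, fun a ha b hb n hn => ?_,
    fun a ha b hb hneg hne => ?_⟩
  · obtain ⟨w, hw, rfl⟩ := hweight a ha
    exact apply_self_pos hB hc hw
  · obtain ⟨u, hu, rfl⟩ := hweight a ha
    obtain ⟨w, hw, rfl⟩ := hweight b hb
    exact ⟨_, two_mul_apply_eq_chainCoeff_mul hB hu hw⟩
  · obtain ⟨u, hu, rfl⟩ := hweight a ha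
    obtain ⟨w, hw, rfl⟩ := hweight b hb
    exact (hΦ _).mpr (isRootOf_sub_zsmul hB hc hu hw hn)
  · obtain ⟨u, hu, rfl⟩ := hweight a ha
    obtain ⟨w, hw, rfl⟩ := hweight b hb
    exact (hΦ _).mpr (isRootOf_add hB hc hu hw hneg hne)

end Killing

theorem casimir_eigenvalues_S2g_and_vogel_parameters_general
    {L : Type*} [LieRing L] [LieAlgebra ℂ L] [FiniteDimensional ℂ L]
    [LieAlgebra.IsSimple ℂ L]
    (H : LieSubalgebra ℂ L) [H.IsCartanSubalgebra]
    (Φ Φpos : Finset (Module.Dual ℂ H))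
    (hΦ : ∀ a, a ∈ Φ ↔ IsRootOf H a)
    (hpos_sub : Φpos ⊆ Φ)
    (hpos_mem : ∀ a ∈ Φ, (a ∈ Φpos ↔ -a ∉ Φpos))
    (hpos_add : ∀ a ∈ Φpos, ∀ b ∈ Φpos, a + b ∈ Φ → a + b ∈ Φpos)
    -- `B` is an invariant scalar product on weights: it is symmetric, biadditive,
    -- ℚ-homogeneous, and on roots it is a positive multiple `c` of the scalar product
    -- induced by the Killing form (via the covector map `tcov`).
    (B : Module.Dual ℂ H → Module.Dual ℂ H → ℚ)
    (hBsymm : ∀ x y, B x y = B y x)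
    (hBadd : ∀ x y z, B (x + y) z = B x z + B y z)
    (tcov : Module.Dual ℂ H → H)
    (htcov : ∀ (a : Module.Dual ℂ H) (h : H), killingForm ℂ L (tcov a : L) (h : L) = a h)
    (c : ℚ) (hcpos : 0 < c)
    (hBkill : ∀ a ∈ Φ, ∀ b ∈ Φ, (B a b : ℂ) = (c : ℂ) * a (tcov b))
    (α₀ : Module.Dual ℂ H) (hα₀ : IsHighestRootOf H Φ Φpos α₀)
    -- the coroot of `α₀`
    (Hc0 : H) (hHc0 : ∀ μ ∈ Φ, (B α₀ α₀ : ℂ) * μ Hc0 = 2 * (B μ α₀ : ℂ))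
    -- `ᾶ`, a highest long root orthogonal to `α₀`
    (atil : Module.Dual ℂ H)
    (hatil : IsHighestLongRootOrtho H Φ Φpos B {α₀} atil)
    -- `2v = dim g₁` is the number of roots of level 1
    (v : ℕ) (hv : (Φ.filter fun μ => μ Hc0 = 1).card = 2 * v)
    -- normalization: the adjoint representation has Casimir eigenvalue 1
    (hnormB : B (α₀ + ∑ μ ∈ Φpos, μ) α₀ = 1)
    -- `hcox` is the dual Coxeter number of the simple factor of `h` containing `ᾶ`
    (hcox : ℚ)
    (hhcox : B (atil + ∑ μ ∈ Φpos.filter fun μ => μ Hc0 = 0, μ) atil =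
      hcox * B atil atil)
    -- Vogel's parameters, normalized so that `α' = -2`
    (α' β' γ' t' : ℚ) (hα' : α' = -2) (ht' : t' = α' + β' + γ')
    (hCartanSq : 2 * t' * B ((2 : ℂ) • α₀ + ∑ μ ∈ Φpos, μ) ((2 : ℂ) • α₀) =
      2 * (2 * t' - α'))
    (hY2 : 2 * t' * B (α₀ + atil + ∑ μ ∈ Φpos, μ) (α₀ + atil) = 2 * (2 * t' - β')) :
    B ((2 : ℂ) • α₀ + ∑ μ ∈ Φpos, μ) ((2 : ℂ) • α₀) = 2 * ((v : ℚ) + 3) / ((v : ℚ) + 2) ∧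
    B (α₀ + atil + ∑ μ ∈ Φpos, μ) (α₀ + atil) = ((v : ℚ) + hcox + 2) / ((v : ℚ) + 2) ∧
    β' = ((v : ℚ) - hcox) + 2 ∧
    γ' = hcox + 2 ∧
    t' = (v : ℚ) + 2 ∧
    t' * B α₀ α₀ = B (α₀ + ∑ μ ∈ Φpos, μ) α₀ := by
  obtain ⟨B, rfl⟩ : ∃ B' : Module.Dual ℂ H →+ Module.Dual ℂ H →+ ℚ, B = fun x y => B' x y :=
    ⟨AddMonoidHom.mk' (fun x => AddMonoidHom.mk' (B x) fun y z => by
      rw [hBsymm, hBadd, hBsymm y, hBsymm z]) fun x y => AddMonoidHom.ext (hBadd x y), rfl⟩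
  beta_reduce at *
  have hroot : IsRootSet Φ B := isRootSet_of_killing hΦ hBsymm htcov hcpos hBkill
  have hpos : IsPositiveSystem Φ Φpos := ⟨hpos_sub, hpos_mem, hpos_add⟩
  have hhigh := hα₀.isHighestRoot
  have ha : B α₀ α₀ ≠ 0 := (hroot.pos α₀ hhigh.mem).ne'
  rw [filter_apply_eq_one ha hHc0] at hv
  rw [filter_apply_eq_zero ha fun μ hμ => hHc0 μ (hpos_sub hμ)] at hhcox
  have hX := hroot.casimir_two_highest hpos hhigh hv hnormB
  have hY := hroot.casimir_highest_add hpos hhigh hv hnormB (hatil.2.1 α₀ rfl)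
    (hatil.apply_self_eq_highest hroot hpos hhigh) hhcox
  rw [two_smul] at hCartanSq ⊢
  obtain ⟨hβ, hγ, ht⟩ := vogel_parameters v.cast_nonneg hX hY hα' ht' hCartanSq hY2
  refine ⟨hX, hY, hβ, hγ, ht, ?_⟩
  rw [hnormB, ht, mul_comm]
  exact hroot.apply_highest_self_mul_eq_one hpos hhigh hv hnormB

/-- Notation: `α₀` is the highest root with coroot `Hc0`; `ᾶ` is a
highest long root orthogonal to `α₀` (the highest root of the relevant simple factor
of the centralizer `h` of the `sl₂`-triple); `twoRho` is the sum of the positive roots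
of `g`; `twoRhoH` is the sum of the positive roots of `h` (the positive roots of `g`
vanishing on `Hc0`); `dim g₁ = 2v`; `hcox = (ᾶ + 2ρ_h, ᾶ)/(ᾶ, ᾶ)` is the dual Coxeter
number of the simple factor of `h` containing `ᾶ`; `B` is normalized so that the
adjoint representation has Casimir eigenvalue 1.  Vogel's parameters `t', β', γ'`
are normalized by `α = -2`, i.e. `t' = -2 + β' + γ'`, the Casimir eigenvalue of the
Cartan square is `2(2t' - α') = 4t' + 4` and that of the component of highest weight
`α₀ + ᾶ` is `2(2t' - β')`, both w.r.t. the scalar product `2t' • B` for which the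
adjoint representation has Casimir eigenvalue `2t'`.  Conclusions: the two Casimir
eigenvalues w.r.t. `B` are `2(v+3)/(v+2)` and `(v+h+2)/(v+2)`, and consequently
`β' = h' + 2`, `γ' = h + 2`, `t' = v + 2`, and `t'` is the dual Coxeter number of `g`. -/
theorem casimir_eigenvalues_S2g_and_vogel_parameters
    {L : Type*} [LieRing L] [LieAlgebra ℂ L] [FiniteDimensional ℂ L]
    [LieAlgebra.IsSimple ℂ L]
    (hnotA1 : ¬ Nonempty (L ≃ₗ⁅ℂ⁆ ↥(LieAlgebra.SpecialLinear.sl (Fin 2) ℂ)))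
    (H : LieSubalgebra ℂ L) [H.IsCartanSubalgebra]
    (Φ Φpos : Finset (Module.Dual ℂ H))
    (hΦ : ∀ a, a ∈ Φ ↔ IsRootOf H a)
    (hpos_sub : Φpos ⊆ Φ)
    (hpos_mem : ∀ a ∈ Φ, (a ∈ Φpos ↔ -a ∉ Φpos))
    (hpos_add : ∀ a ∈ Φpos, ∀ b ∈ Φpos, a + b ∈ Φ → a + b ∈ Φpos)
    -- `B` is an invariant scalar product on weights: it is symmetric, biadditive,
    -- ℚ-homogeneous, and on roots it is a positive multiple `c` of the scalar product
    -- induced by the Killing form (via the covector map `tcov`).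
    (B : Module.Dual ℂ H → Module.Dual ℂ H → ℚ)
    (hBsymm : ∀ x y, B x y = B y x)
    (hBadd : ∀ x y z, B (x + y) z = B x z + B y z)
    (hBsmul : ∀ (q : ℚ) (x y), B ((q : ℂ) • x) y = q * B x y)
    (tcov : Module.Dual ℂ H → H)
    (htcov : ∀ (a : Module.Dual ℂ H) (h : H), killingForm ℂ L (tcov a : L) (h : L) = a h)
    (c : ℚ) (hcpos : 0 < c)
    (hBkill : ∀ a ∈ Φ, ∀ b ∈ Φ, (B a b : ℂ) = (c : ℂ) * a (tcov b))
    (α₀ : Module.Dual ℂ H) (hα₀ : IsHighestRootOf H Φ Φpos α₀)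
    -- the coroot of `α₀`
    (Hc0 : H) (hHc0 : ∀ μ ∈ Φ, (B α₀ α₀ : ℂ) * μ Hc0 = 2 * (B μ α₀ : ℂ))
    -- `ᾶ`, a highest long root orthogonal to `α₀`
    (atil : Module.Dual ℂ H)
    (hatil : IsHighestLongRootOrtho H Φ Φpos B {α₀} atil)
    -- `2v = dim g₁` is the number of roots of level 1
    (v : ℕ) (hv : (Φ.filter fun μ => μ Hc0 = 1).card = 2 * v)
    -- normalization: the adjoint representation has Casimir eigenvalue 1
    (hnormB : B (α₀ + ∑ μ ∈ Φpos, μ) α₀ = 1)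
    -- `hcox` is the dual Coxeter number of the simple factor of `h` containing `ᾶ`
    (hcox : ℚ)
    (hhcox : B (atil + ∑ μ ∈ Φpos.filter fun μ => μ Hc0 = 0, μ) atil =
      hcox * B atil atil)
    -- Vogel's parameters, normalized so that `α' = -2`
    (α' β' γ' t' : ℚ) (hα' : α' = -2) (ht' : t' = α' + β' + γ')
    (hCartanSq : 2 * t' * B ((2 : ℂ) • α₀ + ∑ μ ∈ Φpos, μ) ((2 : ℂ) • α₀) =
      2 * (2 * t' - α'))
    (hY2 : 2 * t' * B (α₀ + atil + ∑ μ ∈ Φpos, μ) (α₀ + atil) = 2 * (2 * t' - β')) :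
    B ((2 : ℂ) • α₀ + ∑ μ ∈ Φpos, μ) ((2 : ℂ) • α₀) = 2 * ((v : ℚ) + 3) / ((v : ℚ) + 2) ∧
    B (α₀ + atil + ∑ μ ∈ Φpos, μ) (α₀ + atil) = ((v : ℚ) + hcox + 2) / ((v : ℚ) + 2) ∧
    β' = ((v : ℚ) - hcox) + 2 ∧
    γ' = hcox + 2 ∧
    t' = (v : ℚ) + 2 ∧
    t' * B α₀ α₀ = B (α₀ + ∑ μ ∈ Φpos, μ) α₀ :=
  casimir_eigenvalues_S2g_and_vogel_parameters_general H Φ Φpos hΦ hpos_sub hpos_mem hpos_add B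
    hBsymm hBadd tcov htcov c hcpos hBkill α₀ hα₀ Hc0 hHc0 atil hatil v hv hnormB hcox hhcox α' β'
    γ' t' hα' ht' hCartanSq hY2

end Stmt6
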